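/- For every natural number n, ∑_{k=0}^{n} (-1/2)^k · binom(n,k) · binom(2k,k) equals 2^{-n} · binom(n, n/2) if n is even, and equals 0 if n is odd. -/

import Mathlib

/-!
Since `(2k).choose k` is the coefficient of `X^k` in `(1 + X)^(2k)`, the binomial theorem
turns `∑ₖ aᵏ (n.choose k) ((2k).choose k)` into the coefficient of `Xⁿ` in
`(a (1 + X)² + X)ⁿ`. For `a = -1/2` the cross term cancels `X`, leaving `(-1/2)ⁿ (1 + X²)ⁿ`,
whose coefficient of `Xⁿ` is `(-1/2)ⁿ (n.choose (n/2))` for even `n` and `0` for odd `n`.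
-/

open Finset Polynomial

theorem sum_pow_mul_choose_mul_choose_two_mul_eq_coeff {R : Type*} [CommRing R] (a : R) (n : ℕ) :
    ∑ k ∈ range (n + 1), a ^ k * n.choose k * (2 * k).choose k
      = ((C a * (1 + X) ^ 2 + X) ^ n).coeff n := by
  rw [add_pow, finsetSum_coeff]
  refine sum_congr rfl fun k hk => ?_
  have hkn : k ≤ n := Nat.lt_succ_iff.mp (mem_range.mp hk)
  have hterm : (C a * (1 + X) ^ 2) ^ k * X ^ (n - k) * (n.choose k : R[X])
      = C (a ^ k * n.choose k) * ((1 + X) ^ (2 * k) * X ^ (n - k)) := by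
    rw [mul_pow, ← pow_mul, map_mul, map_pow, map_natCast]; ring
  rw [hterm, coeff_C_mul, coeff_mul_X_pow', if_pos (Nat.sub_le n k), Nat.sub_sub_self hkn,
    coeff_one_add_X_pow]

theorem coeff_one_add_X_sq_pow {R : Type*} [CommRing R] (n : ℕ) :
    ((1 + X ^ 2 : R[X]) ^ n).coeff n = if Even n then (n.choose (n / 2) : R) else 0 := by
  have hexpand : (1 + X ^ 2 : R[X]) ^ n = expand R 2 ((1 + X) ^ n) := by simp
  simp only [hexpand, coeff_expand two_pos, coeff_one_add_X_pow, even_iff_two_dvd]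

theorem stmt_12 (n : ℕ) :
    ∑ k ∈ Finset.range (n + 1),
      (-(1/2) : ℝ) ^ k * (n.choose k : ℝ) * ((2 * k).choose k : ℝ)
    = if Even n then (2 : ℝ)⁻¹ ^ n * (n.choose (n / 2) : ℝ) else 0 := by
  have hsquare : C (-(1/2) : ℝ) * (1 + X) ^ 2 + X = C (-(1/2)) * (1 + X ^ 2) := by
    have h : (2 : ℝ[X]) * C (-(1/2)) = -1 := by
      rw [← C_ofNat, ← C_mul]; norm_num
    linear_combination X * h
  rw [sum_pow_mul_choose_mul_choose_two_mul_eq_coeff, hsquare, mul_pow, ← C_pow, coeff_C_mul,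
    coeff_one_add_X_sq_pow]
  split_ifs with hn
  · rw [hn.neg_pow, one_div]
  · exact mul_zero _
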